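/- Structure theorem, second version: Let G be an abelian group and ≾ a total quasi-order on G. Then ≾ satisfies (Q1) and (Q2) if and only if G admits a subgroup H such that: (1) H is an initial segment of G; (2) ≾ restricted to H is a total order making (H,≾) an ordered abelian group; (3') ≾ induces a well-defined quasi-order on G/H via g + H ≾ h + H ⇔ g − h ∈ H ∨ (g − h ∉ H ∧ g ≾ h), and this induced quasi-order on G/H is valuational; (4) for all g, h ∈ G, if g ∉ H and g − h ∈ H then g ∼ h. -/

import Mathlib

/-!
Under (Q1) and (Q2) an element `g ≠ 0` satisfies `g ∼ -g` exactly when it lies strictly above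
both `0` and `-g`. The remaining elements `H = {g | g ≾ 0 ∨ -g ≾ 0}` form a subgroup and an
initial segment; on `H` the quasi-order is antisymmetric and satisfies `x ≾ y ↔ 0 ≾ y - x`, hence
is translation invariant. Off `H`, `≾` cannot see `H`-cosets and satisfies
`g + h ≾ g ∨ g + h ≾ h`, so the `∼`-classes of `G ⧸ H` are the values of a valuation.
Conversely, if `¬ (y ∼ z)` with `y, z` not both in `H`, then `v y ≠ v z`, so
`v (y + z) = min (v y) (v z) ≤ v (x + z)` whenever `x ≾ y`, and this gives (Q2).
-/

universe u

variable {G : Type u} [AddCommGroup G]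

/-- `r` is a total quasi-order: reflexive, transitive, any two elements comparable. -/
def TotalQO (r : G → G → Prop) : Prop :=
  (∀ x, r x x) ∧ (∀ x y z, r x y → r y z → r x z) ∧ (∀ x y, r x y ∨ r y x)

/-- Axiom (Q1): `x ∼ 0 → x = 0`. -/
def AxQ1 (r : G → G → Prop) : Prop := ∀ x, r x 0 → r 0 x → x = 0

/-- Axiom (Q2): `x ≾ y ∧ ¬(y ∼ z) → x + z ≾ y + z`. -/
def AxQ2 (r : G → G → Prop) : Prop :=
  ∀ x y z, r x y → ¬(r y z ∧ r z y) → r (x + z) (y + z)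

/-- A compatible quasi-ordered abelian group: a total quasi-order satisfying (Q1) and (Q2). -/
def Compatible (r : G → G → Prop) : Prop := TotalQO r ∧ AxQ1 r ∧ AxQ2 r

/-- `g` is o-type: its `∼`-class is a singleton and `g` does not have order 2. -/
def OType (r : G → G → Prop) (g : G) : Prop :=
  (∀ h, r h g → r g h → h = g) ∧ (g + g = 0 → g = 0)

/-- `g` is v-type: its `∼`-class is not a singleton, or `g + g = 0`. -/
def VType (r : G → G → Prop) (g : G) : Prop :=
  (∃ h, h ≠ g ∧ r h g ∧ r g h) ∨ g + g = 0

/-- A group valuation with values in `WithTop Γ` (`⊤` playing the role of `∞`). -/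
def IsValuation {A : Type u} [AddCommGroup A] {Γ : Type u} [LinearOrder Γ]
    (v : A → WithTop Γ) : Prop :=
  (∀ g, v g = ⊤ ↔ g = 0) ∧ (∀ g, v (-g) = v g) ∧
  (∀ g h, min (v g) (v h) ≤ v (g + h))

/-- A quasi-order is valuational if it is induced by some valuation:
`g ≾ h ↔ v g ≥ v h`. -/
def Valuational {A : Type u} [AddCommGroup A] (r : A → A → Prop) : Prop :=
  ∃ (Γ : Type u) (_ : LinearOrder Γ) (v : A → WithTop Γ),
    IsValuation v ∧ ∀ g h, r g h ↔ v h ≤ v g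

open QuotientAddGroup

def IsInitialSegment {α : Type*} (r : α → α → Prop) (S : Set α) : Prop :=
  ∀ s ∈ S, ∀ a, r a s → a ∈ S

/-- The relation on `G` whose descent to `G ⧸ H` is condition (3'). -/
def cosetRel (r : G → G → Prop) (H : AddSubgroup G) (g h : G) : Prop :=
  g - h ∈ H ∨ (g - h ∉ H ∧ r g h)

def QuotRel (r : G → G → Prop) (H : AddSubgroup G) (α β : G ⧸ H) : Prop :=
  ∃ g h : G, (g : G ⧸ H) = α ∧ (h : G ⧸ H) = β ∧ cosetRel r H g h

section TotalQO

variable {α : Type*} {r : α → α → Prop}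

theorem TotalQO.refl (hr : TotalQO r) (x : α) : r x x := hr.1 x

theorem TotalQO.trans (hr : TotalQO r) {x y z : α} : r x y → r y z → r x z := hr.2.1 x y z

theorem TotalQO.total (hr : TotalQO r) (x y : α) : r x y ∨ r y x := hr.2.2 x y

theorem TotalQO.of_not (hr : TotalQO r) {x y : α} (h : ¬ r x y) : r y x :=
  (hr.total x y).resolve_left h

theorem IsInitialSegment.rel_of_mem_of_notMem {S : Set α} (hS : IsInitialSegment r S)
    (hr : TotalQO r) {s a : α} (hs : s ∈ S) (ha : a ∉ S) : r s a :=
  hr.of_not fun h => ha (hS s hs a h)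

end TotalQO

/-- The valuation sends `0` to `⊤` and `α ≠ 0` to its `∼`-class. -/
theorem TotalQO.valuational {A : Type u} [AddCommGroup A] {R : A → A → Prop} (hR : TotalQO R)
    (hzero : ∀ α, R α 0 → α = 0) (hneg : ∀ α, R (-α) α)
    (hadd : ∀ α β, R (α + β) α ∨ R (α + β) β) : Valuational R := by
  classical
  -- reversed, since `R`-smaller elements get larger values
  let _ : Preorder A :=
    { le := fun α β => R β α
      le_refl := hR.refl
      le_trans := fun _ _ _ h h' => hR.trans h' h }
  have : @Std.Total A (· ≤ ·) := ⟨fun α β => hR.total β α⟩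
  let v : A → WithTop (Antisymmetrization A (· ≤ ·)) := fun α =>
    if α = 0 then ⊤ else toAntisymmetrization (· ≤ ·) α
  have hv_top : ∀ α, v α = ⊤ ↔ α = 0 := fun α => by by_cases hα : α = 0 <;> simp [v, hα]
  have hv : ∀ α β, R α β ↔ v β ≤ v α := by
    intro α β
    by_cases hβ : β = 0
    · subst hβ
      simp only [v, if_pos rfl, top_le_iff, hv_top]
      exact ⟨hzero α, fun h => h ▸ hR.refl 0⟩
    by_cases hα : α = 0
    · subst hα
      refine iff_of_true ((hR.total 0 β).elim id fun h => (hzero β h).symm ▸ hR.refl 0) ?_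
      simp [v]
    simp only [v, if_neg hα, if_neg hβ, WithTop.coe_le_coe,
      toAntisymmetrization_le_toAntisymmetrization_iff]
    rfl
  refine ⟨_, inferInstance, v, ⟨hv_top, fun α => ?_, fun α β => ?_⟩, hv⟩
  · refine le_antisymm ((hv _ _).1 ?_) ((hv _ _).1 (hneg α))
    simpa using hneg (-α)
  · exact min_le_iff.2 ((hadd α β).imp (hv _ _).1 (hv _ _).1)

theorem IsValuation.map_add_of_ne {A : Type u} [AddCommGroup A] {Γ : Type u} [LinearOrder Γ]
    {v : A → WithTop Γ} (hv : IsValuation v) {α β : A} (hne : v α ≠ v β) :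
    v (α + β) = min (v α) (v β) := by
  have key : ∀ {α β : A}, v α < v β → v (α + β) = v α := by
    intro α β hlt
    refine le_antisymm ?_ (by simpa [min_eq_left hlt.le] using hv.2.2 α β)
    by_contra hgt
    have h := hv.2.2 (α + β) (-β)
    rw [hv.2.1, add_neg_cancel_right] at h
    exact (lt_min (not_le.1 hgt) hlt).not_ge h
  rcases hne.lt_or_gt with hlt | hlt
  · rw [key hlt, min_eq_left hlt.le]
  · rw [add_comm, key hlt, min_eq_right hlt.le]

namespace Compatible

variable {r : G → G → Prop}

theorem eq_zero_of_antisymmRel (hr : Compatible r) {x : G} (h : AntisymmRel r x 0) : x = 0 :=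
  hr.2.1 x h.1 h.2

theorem rel_add_right (hr : Compatible r) {x y z : G} (hxy : r x y)
    (hyz : ¬ AntisymmRel r y z) : r (x + z) (y + z) :=
  hr.2.2 x y z hxy hyz

theorem not_antisymmRel_zero (hr : Compatible r) {x : G} (hx : x ≠ 0) :
    ¬ AntisymmRel r 0 x :=
  fun h => hx (hr.eq_zero_of_antisymmRel h.symm)

theorem add_rel_of_rel_zero (hr : Compatible r) {x : G} (hx : r x 0) (y : G) :
    r (x + y) y := by
  by_cases hy : y = 0
  · simpa [hy] using hx
  · simpa using hr.rel_add_right hx (hr.not_antisymmRel_zero hy)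

theorem zero_rel_neg (hr : Compatible r) {x : G} (hx : r x 0) : r 0 (-x) := by
  by_cases hx0 : x = 0
  · simpa [hx0] using hx
  · simpa using hr.rel_add_right hx (hr.not_antisymmRel_zero (neg_ne_zero.2 hx0))

theorem antisymmRel_neg_of_antisymmRel (hr : Compatible r) {x y : G} (h : AntisymmRel r x y)
    (hne : x ≠ y) : AntisymmRel r y (-y) := by
  by_contra hy
  have hx : ¬ AntisymmRel r x (-y) := fun hx =>
    hy ⟨hr.1.trans h.2 hx.1, hr.1.trans hx.2 h.1⟩
  have h₁ : r (x + -y) 0 := by simpa using hr.rel_add_right h.1 hy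
  have h₂ : r 0 (x + -y) := by simpa using hr.rel_add_right h.2 hx
  exact hne (add_neg_eq_zero.1 (hr.eq_zero_of_antisymmRel ⟨h₁, h₂⟩))

theorem antisymmRel_neg_of_not_rel_zero (hr : Compatible r) {x : G} (hx : ¬ r x 0)
    (hnx : ¬ r (-x) 0) : AntisymmRel r x (-x) := by
  by_contra h
  exact hx (by simpa using hr.rel_add_right (hr.1.of_not hnx) fun h' => h h'.symm)

theorem not_rel_zero_of_antisymmRel_neg (hr : Compatible r) {x : G} (hx : x ≠ 0)
    (h : AntisymmRel r x (-x)) : ¬ r x 0 :=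
  fun hx0 => hx (hr.eq_zero_of_antisymmRel ⟨hx0, hr.1.trans (hr.zero_rel_neg hx0) h.2⟩)

theorem not_rel_of_not_rel_zero (hr : Compatible r) {a s : G} (ha : ¬ r a 0)
    (hna : ¬ r (-a) 0) (hs : r s 0 ∨ r (-s) 0) : ¬ r a s := by
  intro has
  have hs0 : ¬ r s 0 := fun h => ha (hr.1.trans has h)
  have hns : r (-s) 0 := hs.resolve_left hs0
  have hss : ¬ AntisymmRel r s (-s) := fun h => hs0 (hr.1.trans h.1 hns)
  have haa := hr.antisymmRel_neg_of_not_rel_zero ha hna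
  have h₁ : r (-(a + s)) 0 := by
    have h := hr.rel_add_right (hr.1.trans haa.2 has) hss
    rwa [add_neg_cancel, ← neg_add] at h
  have has' : ¬ AntisymmRel r a s := by
    intro h
    rcases eq_or_ne a s with rfl | hne
    · exact hna hns
    · exact hss (hr.antisymmRel_neg_of_antisymmRel h hne)
  have h₂ : r s (a + s) := by simpa using hr.rel_add_right (hr.1.of_not ha) has'
  have h₃ : ¬ AntisymmRel r (a + s) (-(a + s)) := fun h =>
    hs0 (hr.1.trans h₂ (hr.1.trans h.1 h₁))
  exact hna (by simpa [add_comm a s] using hr.rel_add_right h₂ h₃)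

def orderSubgroup (hr : Compatible r) : AddSubgroup G where
  carrier := {g | r g 0 ∨ r (-g) 0}
  zero_mem' := Or.inl (hr.1.refl 0)
  neg_mem' := by
    rintro g (h | h)
    · exact Or.inr (by simpa using h)
    · exact Or.inl h
  add_mem' := by
    have key : ∀ {x y : G}, r x 0 → r (-y) 0 → r (x + y) 0 ∨ r (-(x + y)) 0 := by
      intro x y hx hy
      by_contra h
      push Not at h
      exact hr.not_rel_of_not_rel_zero h.1 h.2 (Or.inr hy) (hr.add_rel_of_rel_zero hx y)
    rintro x y (hx | hx) (hy | hy)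
    · exact Or.inl (hr.1.trans (hr.add_rel_of_rel_zero hx y) hy)
    · exact key hx hy
    · exact add_comm y x ▸ key hy hx
    · exact Or.inr (by rw [neg_add]; exact hr.1.trans (hr.add_rel_of_rel_zero hx (-y)) hy)

theorem mem_orderSubgroup (hr : Compatible r) {g : G} :
    g ∈ hr.orderSubgroup ↔ r g 0 ∨ r (-g) 0 :=
  Iff.rfl

theorem notMem_orderSubgroup (hr : Compatible r) {g : G} :
    g ∉ hr.orderSubgroup ↔ g ≠ 0 ∧ AntisymmRel r g (-g) := by
  rw [mem_orderSubgroup, not_or]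
  refine ⟨fun h => ⟨fun hg => h.1 (hg ▸ hr.1.refl 0),
    hr.antisymmRel_neg_of_not_rel_zero h.1 h.2⟩, fun ⟨hg, h⟩ => ⟨?_, ?_⟩⟩
  · exact hr.not_rel_zero_of_antisymmRel_neg hg h
  · exact hr.not_rel_zero_of_antisymmRel_neg (neg_ne_zero.2 hg) (by simpa using h.symm)

theorem isInitialSegment_orderSubgroup (hr : Compatible r) :
    IsInitialSegment r hr.orderSubgroup := by
  intro s hs a has
  by_contra ha
  rw [SetLike.mem_coe, mem_orderSubgroup, not_or] at ha
  exact hr.not_rel_of_not_rel_zero ha.1 ha.2 hs has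

theorem eq_of_antisymmRel_of_mem (hr : Compatible r) {x y : G} (hy : y ∈ hr.orderSubgroup)
    (h : AntisymmRel r x y) : x = y := by
  by_contra hne
  have hy0 : y ≠ 0 := by
    rintro rfl
    exact hne (hr.eq_zero_of_antisymmRel h)
  exact hr.notMem_orderSubgroup.2 ⟨hy0, hr.antisymmRel_neg_of_antisymmRel h hne⟩ hy

theorem zero_rel_sub_of_rel (hr : Compatible r) {x y : G} (hx : x ∈ hr.orderSubgroup)
    (hxy : r x y) : r 0 (y - x) := by
  by_cases hyx : AntisymmRel r y (-x)
  · obtain rfl : y = -x := hr.eq_of_antisymmRel_of_mem (neg_mem hx) hyx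
    -- `x ≾ -x` with `x ∈ H` forces `x ≾ 0`, hence `x + x ≾ 0`
    have hx0 : r x 0 := (hr.mem_orderSubgroup.1 hx).elim id (hr.1.trans hxy)
    simpa [sub_eq_add_neg] using hr.zero_rel_neg (hr.1.trans (hr.add_rel_of_rel_zero hx0 x) hx0)
  · simpa [sub_eq_add_neg] using hr.rel_add_right hxy hyx

theorem rel_iff_zero_rel_sub (hr : Compatible r) {x y : G} (hx : x ∈ hr.orderSubgroup)
    (hy : y ∈ hr.orderSubgroup) : r x y ↔ r 0 (y - x) := by
  refine ⟨hr.zero_rel_sub_of_rel hx, fun h => ?_⟩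
  by_contra hxy
  have h' : r 0 (-(y - x)) := by simpa using hr.zero_rel_sub_of_rel hy (hr.1.of_not hxy)
  have hyx : y - x = 0 := by
    rcases hr.mem_orderSubgroup.1 (sub_mem hy hx) with h₀ | h₀
    · exact hr.eq_zero_of_antisymmRel ⟨h₀, h⟩
    · exact neg_eq_zero.1 (hr.eq_zero_of_antisymmRel ⟨h₀, h'⟩)
  exact hxy (sub_eq_zero.1 hyx ▸ hr.1.refl x)

theorem add_rel_add_right (hr : Compatible r) {x y z : G} (hx : x ∈ hr.orderSubgroup)
    (hy : y ∈ hr.orderSubgroup) (hz : z ∈ hr.orderSubgroup) (hxy : r x y) :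
    r (x + z) (y + z) := by
  rw [hr.rel_iff_zero_rel_sub (add_mem hx hz) (add_mem hy hz), add_sub_add_right_eq_sub]
  exact (hr.rel_iff_zero_rel_sub hx hy).1 hxy

theorem antisymmRel_add_of_rel_zero (hr : Compatible r) {g k : G} (hg : g ∉ hr.orderSubgroup)
    (hk : r k 0) : AntisymmRel r (g + k) g := by
  have hk' : k ∈ hr.orderSubgroup := Or.inl hk
  have hgk : g + k ∉ hr.orderSubgroup := by rwa [AddSubgroup.add_mem_cancel_right _ hk']
  have hle : r (g + k) g := add_comm k g ▸ hr.add_rel_of_rel_zero hk g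
  have hgk' : ¬ AntisymmRel r g k := fun h => hg (hr.isInitialSegment_orderSubgroup k hk' g h.1)
  have h := hr.rel_add_right (hr.1.trans (hr.notMem_orderSubgroup.1 hgk).2.2 hle) hgk'
  rw [neg_add, neg_add_cancel_right] at h
  exact ⟨hle, hr.1.trans (hr.notMem_orderSubgroup.1 hg).2.1 h⟩

theorem antisymmRel_of_sub_mem (hr : Compatible r) {g h : G} (hg : g ∉ hr.orderSubgroup)
    (hgh : g - h ∈ hr.orderSubgroup) : AntisymmRel r g h := by
  have hk : h - g ∈ hr.orderSubgroup := (AddSubgroup.sub_mem_comm_iff _).1 hgh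
  have hh : h ∉ hr.orderSubgroup := by
    rwa [← sub_add_cancel h g, AddSubgroup.add_mem_cancel_left _ hk]
  rcases hr.mem_orderSubgroup.1 hk with hk | hk
  · simpa using (hr.antisymmRel_add_of_rel_zero hg hk).symm
  · simpa using hr.antisymmRel_add_of_rel_zero hh hk

theorem add_rel_or_add_rel (hr : Compatible r) {g : G} (hg : g ∉ hr.orderSubgroup) (h : G) :
    r (g + h) g ∨ r (g + h) h := by
  by_cases hs : AntisymmRel r (-g) (g + h)
  · exact Or.inl (hr.1.trans hs.2 (hr.notMem_orderSubgroup.1 hg).2.2)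
  · have h0 : r 0 (-g) := hr.1.of_not fun h' => hg (Or.inr h')
    exact Or.inr (by simpa using hr.rel_add_right h0 hs)

end Compatible

section Quotient

variable {r : G → G → Prop} {H : AddSubgroup G}

theorem cosetRel_of_rel {g h : G} (hgh : r g h) : cosetRel r H g h :=
  (em _).imp_right fun hn => ⟨hn, hgh⟩

theorem cosetRel_iff (hr : TotalQO r) (hseg : IsInitialSegment r H)
    (h4 : ∀ g h : G, g ∉ H → g - h ∈ H → AntisymmRel r g h) {g h : G} :
    cosetRel r H g h ↔ g ∈ H ∨ (h ∉ H ∧ r g h) := by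
  constructor
  · by_cases hg : g ∈ H
    · exact fun _ => Or.inl hg
    rintro (hgh | ⟨-, hgh⟩)
    · exact Or.inr ⟨fun hh => hg (by simpa using add_mem hgh hh), (h4 g h hg hgh).1⟩
    · exact Or.inr ⟨fun hh => hg (hseg h hh g hgh), hgh⟩
  · rintro (hg | ⟨hh, hgh⟩)
    · by_cases hh : h ∈ H
      · exact Or.inl (sub_mem hg hh)
      · exact cosetRel_of_rel (hseg.rel_of_mem_of_notMem hr hg hh)
    · exact cosetRel_of_rel hgh

theorem quotRel_mk (hr : TotalQO r) (hseg : IsInitialSegment r H)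
    (h4 : ∀ g h : G, g ∉ H → g - h ∈ H → AntisymmRel r g h) {g h : G} :
    QuotRel r H g h ↔ cosetRel r H g h := by
  refine ⟨?_, fun hgh => ⟨g, h, rfl, rfl, hgh⟩⟩
  rintro ⟨g', h', hg, hh, hgh⟩
  have hmem : ∀ {a b : G}, (a : G ⧸ H) = b → (a ∈ H ↔ b ∈ H) := fun hab => by
    rw [← eq_zero_iff, ← eq_zero_iff, hab]
  rw [cosetRel_iff hr hseg h4] at hgh ⊢
  by_cases hg₀ : g ∈ H
  · exact Or.inl hg₀
  rcases hgh with hg' | ⟨hh', hgh⟩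
  · exact absurd ((hmem hg).1 hg') hg₀
  have hg'' := h4 g g' hg₀ ((AddSubgroup.sub_mem_comm_iff _).1 (eq_iff_sub_mem.1 hg))
  have hh'' := h4 h' h hh' (eq_iff_sub_mem.1 hh)
  exact Or.inr ⟨(hmem hh).not.1 hh', hr.trans (hr.trans hg''.1 hgh) hh''.1⟩

theorem totalQO_quotRel (hr : TotalQO r) (hseg : IsInitialSegment r H)
    (h4 : ∀ g h : G, g ∉ H → g - h ∈ H → AntisymmRel r g h) : TotalQO (QuotRel r H) := by
  refine ⟨fun α => ?_, fun α β γ => ?_, fun α β => ?_⟩ <;>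
    obtain ⟨g, rfl⟩ := mk_surjective α
  · exact (quotRel_mk hr hseg h4).2 (Or.inl (by simp))
  · obtain ⟨h, rfl⟩ := mk_surjective β
    obtain ⟨k, rfl⟩ := mk_surjective γ
    simp only [quotRel_mk hr hseg h4, cosetRel_iff hr hseg h4]
    rintro (hg | ⟨hh, hgh⟩) (hh' | ⟨hk, hhk⟩)
    · exact Or.inl hg
    · exact Or.inl hg
    · exact absurd hh' hh
    · exact Or.inr ⟨hk, hr.trans hgh hhk⟩
  · obtain ⟨h, rfl⟩ := mk_surjective β
    simp only [quotRel_mk hr hseg h4]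
    exact (hr.total g h).imp cosetRel_of_rel cosetRel_of_rel

theorem valuational_quotRel (hr : TotalQO r) (hseg : IsInitialSegment r H)
    (h4 : ∀ g h : G, g ∉ H → g - h ∈ H → AntisymmRel r g h) (hneg : ∀ g ∉ H, r (-g) g)
    (hadd : ∀ g ∉ H, ∀ h, r (g + h) g ∨ r (g + h) h) : Valuational (QuotRel r H) := by
  refine (totalQO_quotRel hr hseg h4).valuational (fun α => ?_) (fun α => ?_) (fun α β => ?_) <;>
    obtain ⟨g, rfl⟩ := mk_surjective α
  · rw [← mk_zero, quotRel_mk hr hseg h4, cosetRel_iff hr hseg h4, mk_zero, eq_zero_iff]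
    exact fun h => h.resolve_right fun h' => h'.1 (zero_mem H)
  · rw [← mk_neg, quotRel_mk hr hseg h4]
    by_cases hg : g ∈ H
    · exact Or.inl (sub_mem (neg_mem hg) hg)
    · exact cosetRel_of_rel (hneg g hg)
  · obtain ⟨h, rfl⟩ := mk_surjective β
    rw [← mk_add, quotRel_mk hr hseg h4, quotRel_mk hr hseg h4]
    by_cases hg : g ∈ H
    · exact Or.inr (Or.inl (by simpa using hg))
    · exact (hadd g hg h).imp cosetRel_of_rel cosetRel_of_rel

variable {Γ : Type u} [LinearOrder Γ] {v : G ⧸ H → WithTop Γ}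

theorem rel_of_val_le (hr : TotalQO r) (hseg : IsInitialSegment r H)
    (h4 : ∀ g h : G, g ∉ H → g - h ∈ H → AntisymmRel r g h)
    (hcv : ∀ g h : G, cosetRel r H g h ↔ v h ≤ v g) {g h : G} (hh : h ∉ H) (hle : v h ≤ v g) :
    r g h := by
  by_cases hg : g ∈ H
  · exact hseg.rel_of_mem_of_notMem hr hg hh
  · rcases (hcv g h).2 hle with hgh | ⟨-, hgh⟩
    · exact (h4 g h hg hgh).1
    · exact hgh

theorem axQ2_of_valuation (hr : TotalQO r) (hseg : IsInitialSegment r H)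
    (htrans : ∀ x y z : G, x ∈ H → y ∈ H → z ∈ H → r x y → r (x + z) (y + z))
    (h4 : ∀ g h : G, g ∉ H → g - h ∈ H → AntisymmRel r g h) (hv : IsValuation v)
    (hcv : ∀ g h : G, cosetRel r H g h ↔ v h ≤ v g) : AxQ2 r := by
  have hv_top : ∀ g : G, v g = ⊤ ↔ g ∈ H := fun g => (hv.1 _).trans (eq_zero_iff g)
  intro x y z hxy hyz
  by_cases hyzH : y ∈ H ∧ z ∈ H
  · exact htrans x y z (hseg y hyzH.1 x hxy) hyzH.1 hyzH.2 hxy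
  have hne : v y ≠ v z := by
    intro heq
    have hy : y ∉ H := fun hy => hyzH ⟨hy, (hv_top z).1 (heq ▸ (hv_top y).2 hy)⟩
    have hz : z ∉ H := fun hz => hy ((hv_top y).1 (heq ▸ (hv_top z).2 hz))
    exact hyz ⟨rel_of_val_le hr hseg h4 hcv hz heq.ge, rel_of_val_le hr hseg h4 hcv hy heq.le⟩
  -- `¬ (y ∼ z)` makes the ultrametric inequality strict at `y + z`
  have hsum : v (y + z : G) = min (v y) (v z) := hv.map_add_of_ne hne
  have hyzH' : y + z ∉ H := by
    rw [← hv_top, hsum, min_eq_top]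
    exact fun h => hne (h.1.trans h.2.symm)
  refine rel_of_val_le hr hseg h4 hcv hyzH' ?_
  calc v (y + z : G) = min (v y) (v z) := hsum
    _ ≤ min (v x) (v z) := min_le_min_right _ ((hcv x y).1 (cosetRel_of_rel hxy))
    _ ≤ v (x + z : G) := hv.2.2 x z

end Quotient

/-- Structure theorem, second version: a total quasi-order `≾`
on an abelian group `G` satisfies (Q1) and (Q2) iff `G` has a subgroup `H`
such that (1) `H` is an initial segment, (2) `(H, ≾)` is an ordered abelian
group, (3') `≾` induces a well-defined valuational quasi-order on `G ⧸ H` via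
`g + H ≾ h + H ↔ g - h ∈ H ∨ (g - h ∉ H ∧ g ≾ h)`, and (4) `g ∉ H` and
`g - h ∈ H` imply `g ∼ h`. -/
theorem structure_theorem_second_version (r : G → G → Prop) (htqo : TotalQO r) :
    (AxQ1 r ∧ AxQ2 r) ↔
    ∃ H : AddSubgroup G,
      (∀ s ∈ H, ∀ a : G, r a s → a ∈ H) ∧
      ((∀ x y : G, x ∈ H → y ∈ H → r x y → r y x → x = y) ∧
        (∀ x y z : G, x ∈ H → y ∈ H → z ∈ H → r x y → r (x + z) (y + z))) ∧
      (∃ R : G ⧸ H → G ⧸ H → Prop,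
        (∀ g h : G, R (g : G ⧸ H) (h : G ⧸ H) ↔
          (g - h ∈ H ∨ (g - h ∉ H ∧ r g h))) ∧
        Valuational R) ∧
      (∀ g h : G, g ∉ H → g - h ∈ H → (r g h ∧ r h g)) := by
  constructor
  · rintro ⟨h1, h2⟩
    have hr : Compatible r := ⟨htqo, h1, h2⟩
    have hseg := hr.isInitialSegment_orderSubgroup
    have h4 : ∀ g h : G, g ∉ hr.orderSubgroup → g - h ∈ hr.orderSubgroup → AntisymmRel r g h :=
      fun _ _ => hr.antisymmRel_of_sub_mem
    refine ⟨hr.orderSubgroup, hseg,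
      ⟨fun x y _ hy hxy hyx => hr.eq_of_antisymmRel_of_mem hy ⟨hxy, hyx⟩,
        fun x y z => hr.add_rel_add_right⟩,
      ⟨QuotRel r hr.orderSubgroup, fun g h => quotRel_mk htqo hseg h4, ?_⟩, h4⟩
    exact valuational_quotRel htqo hseg h4
      (fun g hg => (hr.notMem_orderSubgroup.1 hg).2.2) (fun g => hr.add_rel_or_add_rel)
  · rintro ⟨H, hseg, ⟨hanti, htrans⟩, ⟨R, hR, Γ, _, v, hv, hvR⟩, h4⟩
    have hcv : ∀ g h : G, cosetRel r H g h ↔ v h ≤ v g := fun g h => (hR g h).symm.trans (hvR _ _)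
    exact ⟨fun x hx0 h0x => hanti x 0 (hseg 0 (zero_mem H) x hx0) (zero_mem H) hx0 h0x,
      axQ2_of_valuation htqo hseg htrans h4 hv hcv⟩
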